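/- (Remark 1: singularity of the PPM ISAC FIM due to delay–data coupling.) Let v be the complex column vector indexed by (Fin L) ⊕ (Fin 1) ⊕ (Fin L) ⊕ (Fin L) whose entry at the first coordinate of the first group (the τ₁-coordinate) is 1, whose entry at the unique coordinate of the second group (the Δτ_q data coordinate) is −1, and which is zero elsewhere. Then J_ppm · v = 0. Consequently, for EVERY square complex matrix M indexed by (Fin L) ⊕ (Fin N_f × Fin L) ⊕ (Fin L), the matrix J_ppmᵀ · M · J_ppm is not invertible (v is a nonzero vector in its kernel); only the sum of the propagation delay and the PPM time-shift is identifiable. -/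
import Mathlib


open Matrix

noncomputable section

/-- The matrix `H`: first column all ones, agreeing with the identity elsewhere. -/
def Hmat (L : ℕ) : Matrix (Fin L) (Fin L) ℂ :=
  Matrix.of fun i j => if j.val = 0 ∨ i = j then 1 else 0

/-- The all-ones column vector `E` of length `L`. -/
def Emat (L : ℕ) : Matrix (Fin L) (Fin 1) ℂ :=
  Matrix.of fun _ _ => 1

/-- The Jacobian matrix of the PPM ISAC case: row blocks `[H, E, 0, 0]` for the delays,
`[0, 0, (2πκT_f)·H, 0]` for the phases, `[0, 0, 0, I_L]` for the amplitudes. -/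
def Jppm (L Nf : ℕ) (Tf : ℝ) :
    Matrix (Fin L ⊕ (Fin Nf × Fin L) ⊕ Fin L) (Fin L ⊕ Fin 1 ⊕ Fin L ⊕ Fin L) ℂ :=
  Matrix.of fun i j =>
    match i, j with
    | Sum.inl a, Sum.inl b => Hmat L a b
    | Sum.inl a, Sum.inr (Sum.inl b) => Emat L a b
    | Sum.inr (Sum.inl (κ, a)), Sum.inr (Sum.inr (Sum.inl b)) =>
        ((2 * Real.pi * (κ.1 : ℝ) * Tf : ℝ) : ℂ) * Hmat L a b
    | Sum.inr (Sum.inr a), Sum.inr (Sum.inr (Sum.inr b)) => (1 : Matrix (Fin L) (Fin L) ℂ) a b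
    | _, _ => 0

/-- The coupling direction: `1` on the `τ₁` coordinate, `−1` on the `Δτ_q` data coordinate. -/
def vppm (L : ℕ) : (Fin L ⊕ Fin 1 ⊕ Fin L ⊕ Fin L) → ℂ :=
  Sum.elim (fun a => if a.val = 0 then 1 else 0)
    (Sum.elim (fun _ => -1) (Sum.elim (fun _ => 0) (fun _ => 0)))

/-- Remark 1: singularity of the PPM ISAC FIM due to delay–data coupling. -/
theorem ppm_fim_singular (L Nf : ℕ) (hL : 1 ≤ L) (Tf : ℝ) :
    (Jppm L Nf Tf).mulVec (vppm L) = 0 ∧ vppm L ≠ 0 ∧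
      ∀ M : Matrix (Fin L ⊕ (Fin Nf × Fin L) ⊕ Fin L) (Fin L ⊕ (Fin Nf × Fin L) ⊕ Fin L) ℂ,
        ¬ IsUnit ((Jppm L Nf Tf)ᵀ * M * Jppm L Nf Tf) := by
  have hJv : (Jppm L Nf Tf).mulVec (vppm L) = 0 := by
    funext i
    simp only [mulVec, dotProduct, Fintype.sum_sum_type, Fintype.sum_prod_type]
    match i with
    | Sum.inl a =>
        simp [Jppm, vppm, Hmat, Emat, Finset.sum_ite_eq, 
          Finset.mul_sum, mul_ite]
        rw [Finset.sum_eq_single ⟨0, hL⟩]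
        · simp
        · intro b _ hb
          simp [Fin.ext_iff] at hb ⊢
          omega
        · simp
    | Sum.inr (Sum.inl (κ, a)) => simp [Jppm, vppm]
    | Sum.inr (Sum.inr a) => simp [Jppm, vppm]
  have hv : vppm L ≠ 0 := by
    intro h
    have := congrFun h (Sum.inr (Sum.inl 0))
    simp [vppm] at this
  refine ⟨hJv, hv, fun M hM => ?_⟩
  have hker : ((Jppm L Nf Tf)ᵀ * M * Jppm L Nf Tf).mulVec (vppm L) = 0 := by
    rw [← mulVec_mulVec, hJv, mulVec_zero]
  have := hM.invertible
  have : vppm L = 0 := by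
    have h2 := congrArg (fun w => (⅟((Jppm L Nf Tf)ᵀ * M * Jppm L Nf Tf)).mulVec w) hker
    simpa [mulVec_mulVec] using h2
  exact hv this
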